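/- For every 6×6 Hermitian matrix P', writing P' in 2×2 block form of 3×3 blocks as P' = [[A, B],[B*, C]] with A, C Hermitian, the inequality 4|P'|² - □' - (1/12)(tr P')² ≥ 0 holds, where □' = -(1/2)⟨A+C,A+C⟩ - (1/2)(⟨A,A⟩ + ⟨C,C⟩ + ⟨B,B*⟩ + ⟨B*,B⟩) + (tr A)² + (tr C)² + 2|tr B|² + |A+C|² and ⟨X,Y⟩ = ∑_{i,j=1}^3 X_{ij} Y_{(4-i)(4-j)}. -/

import Mathlib

open Matrix
open scoped ComplexOrder

/-- The anti-diagonal pairing `⟨X, Y⟩ = ∑ X_{ij} Y_{(4-i)(4-j)}` (1-based;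
`Fin.rev` in 0-based indexing) on `3×3` complex matrices. -/
noncomputable def apair (X Y : Matrix (Fin 3) (Fin 3) ℂ) : ℂ :=
  ∑ i, ∑ j, X i j * Y i.rev j.rev

/-- Embedding of `Fin 3` as the first three indices of `Fin 6`. -/
def lo (i : Fin 3) : Fin 6 := ⟨i.val, by have := i.isLt; omega⟩

/-- Embedding of `Fin 3` as the last three indices of `Fin 6`. -/
def hi (i : Fin 3) : Fin 6 := ⟨i.val + 3, by have := i.isLt; omega⟩

/-!
Write `S = A + C`, `D = A - C` and let `flipInner X = ∑ X i j * conj (X j.rev i.rev)` be the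
Frobenius pairing of `X` with its transpose along the anti-diagonal; it is real, equals `⟨X, X⟩`
for Hermitian `X`, and `⟨B, B*⟩ = ⟨B*, B⟩ = flipInner B`. By the parallelogram law the expression
splits as
`(|S|² + ¾ flipInner S - 7/12 (tr S)²) + (2|D|² + ¼ flipInner D - ½ (tr D)²)
  + (8|B|² + flipInner B - 2|tr B|²)`,
and each bracket is nonnegative by `flipInner X ≤ |X|²` (Cauchy–Schwarz) and
`|tr X|² ≤ (n/2)(|X|² + flipInner X)`. The latter holds because `tr X` only sees the part of `X`
symmetric under the anti-diagonal flip, whose squared norm is `(|X|² + flipInner X)/2`.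
-/

theorem sum_sum_rev_swap {M : Type*} [AddCommMonoid M] {n : ℕ} (f : Fin n → Fin n → M) :
    ∑ i, ∑ j, f (Fin.rev j) (Fin.rev i) = ∑ i, ∑ j, f i j := by
  rw [Finset.sum_comm]
  refine Fintype.sum_equiv Fin.revPerm _ _ fun i => ?_
  exact Fintype.sum_equiv Fin.revPerm _ _ fun j => rfl

theorem sum_norm_sq_add_add_sum_norm_sq_sub {n : ℕ} (X Y : Matrix (Fin n) (Fin n) ℂ) :
    ∑ i, ∑ j, ‖(X + Y) i j‖ ^ 2 + ∑ i, ∑ j, ‖(X - Y) i j‖ ^ 2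
      = 2 * (∑ i, ∑ j, ‖X i j‖ ^ 2 + ∑ i, ∑ j, ‖Y i j‖ ^ 2) := by
  have hentry : ∀ i j, ‖X i j + Y i j‖ ^ 2 + ‖X i j - Y i j‖ ^ 2
      = 2 * (‖X i j‖ ^ 2 + ‖Y i j‖ ^ 2) := fun i j => by
    simpa only [sq] using parallelogram_law_with_norm ℝ (X i j) (Y i j)
  simp only [Matrix.add_apply, Matrix.sub_apply, ← Finset.sum_add_distrib, hentry, Finset.mul_sum]

theorem Matrix.IsHermitian.ofReal_re_trace {n : Type*} [Fintype n] {S : Matrix n n ℂ}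
    (hS : S.IsHermitian) : (S.trace.re : ℂ) = S.trace :=
  Complex.conj_eq_iff_re.mp (by simpa [trace_conjTranspose] using congrArg trace hS)

theorem Matrix.IsHermitian.norm_trace_sq {n : Type*} [Fintype n] {S : Matrix n n ℂ}
    (hS : S.IsHermitian) : ‖S.trace‖ ^ 2 = S.trace.re ^ 2 := by
  rw [← hS.ofReal_re_trace, Complex.norm_real, Real.norm_eq_abs, sq_abs, Complex.ofReal_re]

section FlipInner

variable {n : ℕ} (X : Matrix (Fin n) (Fin n) ℂ)

noncomputable def flipInner : ℂ :=
  ∑ i, ∑ j, X i j * star (X j.rev i.rev)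

theorem star_flipInner : star (flipInner X) = flipInner X := by
  simp only [flipInner, star_sum, star_mul, star_star]
  rw [← sum_sum_rev_swap]
  simp only [Fin.rev_rev]

theorem ofReal_re_flipInner : ((flipInner X).re : ℂ) = flipInner X :=
  Complex.conj_eq_iff_re.mp (star_flipInner X)

theorem re_flipInner_le : (flipInner X).re ≤ ∑ i, ∑ j, ‖X i j‖ ^ 2 := by
  have hterm : ∀ i j, (X i j * star (X j.rev i.rev)).re
      ≤ (‖X i j‖ ^ 2 + ‖X j.rev i.rev‖ ^ 2) / 2 := fun i j => by
    calc (X i j * star (X j.rev i.rev)).re ≤ ‖X i j‖ * ‖X j.rev i.rev‖ := by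
          simpa using Complex.re_le_norm (X i j * star (X j.rev i.rev))
      _ ≤ _ := by nlinarith [sq_nonneg (‖X i j‖ - ‖X j.rev i.rev‖)]
  calc (flipInner X).re ≤ ∑ i, ∑ j, (‖X i j‖ ^ 2 + ‖X j.rev i.rev‖ ^ 2) / 2 := by
        simp only [flipInner, Complex.re_sum]
        exact Finset.sum_le_sum fun i _ => Finset.sum_le_sum fun j _ => hterm i j
    _ = ∑ i, ∑ j, ‖X i j‖ ^ 2 := by
        simp only [add_div, Finset.sum_add_distrib]
        rw [sum_sum_rev_swap fun i j => ‖X i j‖ ^ 2 / 2]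
        simp only [← Finset.sum_add_distrib, add_halves]

theorem sum_norm_add_flip_sq :
    ∑ i, ∑ j, ‖X i j + X j.rev i.rev‖ ^ 2 = 2 * (∑ i, ∑ j, ‖X i j‖ ^ 2 + (flipInner X).re) := by
  have hterm : ∀ i j, ‖X i j + X j.rev i.rev‖ ^ 2
      = ‖X i j‖ ^ 2 + ‖X j.rev i.rev‖ ^ 2 + 2 * (X i j * star (X j.rev i.rev)).re := fun i j => by
    simp only [Complex.sq_norm]; exact Complex.normSq_add _ _
  simp only [hterm, Finset.sum_add_distrib, sum_sum_rev_swap fun i j => ‖X i j‖ ^ 2, flipInner,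
    Complex.re_sum, ← Finset.mul_sum]
  ring

theorem norm_trace_sq_le :
    ‖X.trace‖ ^ 2 ≤ n / 2 * (∑ i, ∑ j, ‖X i j‖ ^ 2 + (flipInner X).re) := by
  have htrace : X.trace = ∑ i, (X i i + X i.rev i.rev) / 2 := by
    have hrev : ∑ i : Fin n, X i.rev i.rev = ∑ i, X i i := Equiv.sum_comp Fin.revPerm fun i => X i i
    rw [← Finset.sum_div, Finset.sum_add_distrib, hrev, add_self_div_two]
    rfl
  calc ‖X.trace‖ ^ 2 ≤ (∑ i, ‖(X i i + X i.rev i.rev) / 2‖) ^ 2 := by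
        rw [htrace]; gcongr; exact norm_sum_le _ _
    _ ≤ n * ∑ i, ‖(X i i + X i.rev i.rev) / 2‖ ^ 2 := by
        simpa using sq_sum_le_card_mul_sum_sq (s := Finset.univ)
          (f := fun i => ‖(X i i + X i.rev i.rev) / 2‖)
    _ ≤ n * ∑ i, ∑ j, ‖(X i j + X j.rev i.rev) / 2‖ ^ 2 := by
        gcongr with i
        exact Finset.single_le_sum (f := fun j => ‖(X i j + X j.rev i.rev) / 2‖ ^ 2)
          (fun _ _ => by positivity) (Finset.mem_univ i)
    _ = n / 2 * (∑ i, ∑ j, ‖X i j‖ ^ 2 + (flipInner X).re) := by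
        simp only [norm_div, Complex.norm_two, div_pow, ← Finset.sum_div, sum_norm_add_flip_sq]
        ring

theorem flipInner_add_add_flipInner_sub (Y : Matrix (Fin n) (Fin n) ℂ) :
    flipInner (X + Y) + flipInner (X - Y) = 2 * (flipInner X + flipInner Y) := by
  simp only [flipInner, Matrix.add_apply, Matrix.sub_apply, star_add, star_sub,
    ← Finset.sum_add_distrib, Finset.mul_sum]
  exact Finset.sum_congr rfl fun i _ => Finset.sum_congr rfl fun j _ => by ring

end FlipInner

theorem apair_comm (X Y : Matrix (Fin 3) (Fin 3) ℂ) : apair X Y = apair Y X := by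
  rw [apair, ← Equiv.sum_comp Fin.revPerm]
  refine Fintype.sum_congr _ _ fun i => ?_
  rw [← Equiv.sum_comp Fin.revPerm]
  simp only [Fin.revPerm_apply, Fin.rev_rev, mul_comm]

theorem apair_self_of_isHermitian {S : Matrix (Fin 3) (Fin 3) ℂ} (hS : S.IsHermitian) :
    apair S S = flipInner S := by
  simp only [apair, flipInner, hS.apply]

theorem apair_conjTranspose_right (B : Matrix (Fin 3) (Fin 3) ℂ) :
    apair B Bᴴ = flipInner B := by
  simp only [apair, flipInner, conjTranspose_apply]

theorem sum_fin_six_eq_lo_add_hi {M : Type*} [AddCommMonoid M] (f : Fin 6 → M) :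
    ∑ k, f k = ∑ i, f (lo i) + ∑ i, f (hi i) := by
  rw [Fin.sum_univ_add (a := 3) (b := 3)]
  congr 1

theorem trace_eq_trace_lo_add_trace_hi (P : Matrix (Fin 6) (Fin 6) ℂ) :
    P.trace = (P.submatrix lo lo).trace + (P.submatrix hi hi).trace :=
  sum_fin_six_eq_lo_add_hi _

theorem Matrix.IsHermitian.sum_norm_sq_eq_blocks {P : Matrix (Fin 6) (Fin 6) ℂ}
    (hP : P.IsHermitian) :
    ∑ k, ∑ l, ‖P k l‖ ^ 2 = ∑ i, ∑ j, ‖P (lo i) (lo j)‖ ^ 2 + ∑ i, ∑ j, ‖P (hi i) (hi j)‖ ^ 2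
      + 2 * ∑ i, ∑ j, ‖P (lo i) (hi j)‖ ^ 2 := by
  have hsymm : ∑ i, ∑ j, ‖P (hi i) (lo j)‖ ^ 2 = ∑ i, ∑ j, ‖P (lo i) (hi j)‖ ^ 2 := by
    rw [Finset.sum_comm]
    simp only [← hP.apply (hi _), norm_star]
  simp only [sum_fin_six_eq_lo_add_hi, Finset.sum_add_distrib, hsymm]
  ring

theorem real_block_inequality {A C : Matrix (Fin 3) (Fin 3) ℂ} (hA : A.IsHermitian)
    (hC : C.IsHermitian) (B : Matrix (Fin 3) (Fin 3) ℂ) :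
    0 ≤ 4 * (∑ i, ∑ j, ‖A i j‖ ^ 2 + ∑ i, ∑ j, ‖C i j‖ ^ 2 + 2 * ∑ i, ∑ j, ‖B i j‖ ^ 2)
      - (-(1/2) * (flipInner (A + C)).re
          - (1/2) * ((flipInner A).re + (flipInner C).re + (flipInner B).re + (flipInner B).re)
          + A.trace.re ^ 2 + C.trace.re ^ 2 + 2 * ‖B.trace‖ ^ 2
          + ∑ i, ∑ j, ‖(A + C) i j‖ ^ 2)
      - (1/12) * (A.trace.re + C.trace.re) ^ 2 := by
  have htrS := norm_trace_sq_le (A + C)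
  have htrD := norm_trace_sq_le (A - C)
  have htrB := norm_trace_sq_le B
  rw [(hA.add hC).norm_trace_sq, trace_add, Complex.add_re] at htrS
  rw [(hA.sub hC).norm_trace_sq, trace_sub, Complex.sub_re] at htrD
  have hflipS := re_flipInner_le (A + C)
  have hflipD := re_flipInner_le (A - C)
  have hflipB := re_flipInner_le B
  have hpar : (flipInner (A + C)).re + (flipInner (A - C)).re
      = 2 * ((flipInner A).re + (flipInner C).re) := by
    simpa using congrArg Complex.re (flipInner_add_add_flipInner_sub A C)
  have hparNorm := sum_norm_sq_add_add_sum_norm_sq_sub A C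
  have hnormD : 0 ≤ ∑ i, ∑ j, ‖(A - C) i j‖ ^ 2 := by positivity
  have hnormB : 0 ≤ ∑ i, ∑ j, ‖B i j‖ ^ 2 := by positivity
  push_cast at htrS htrD htrB
  linarith

theorem stmt18 (P : Matrix (Fin 6) (Fin 6) ℂ) (hP : P.IsHermitian)
    (A B C : Matrix (Fin 3) (Fin 3) ℂ)
    (hA : ∀ i j, A i j = P (lo i) (lo j))
    (hB : ∀ i j, B i j = P (lo i) (hi j))
    (hC : ∀ i j, C i j = P (hi i) (hi j)) :
    0 ≤ 4 * ((∑ i, ∑ j, ‖P i j‖ ^ 2 : ℝ) : ℂ)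
      - (-(1/2) * apair (A + C) (A + C)
          - (1/2) * (apair A A + apair C C + apair B Bᴴ + apair Bᴴ B)
          + A.trace ^ 2 + C.trace ^ 2
          + 2 * ((‖B.trace‖ ^ 2 : ℝ) : ℂ)
          + ((∑ i, ∑ j, ‖(A + C) i j‖ ^ 2 : ℝ) : ℂ))
      - (1/12) * P.trace ^ 2 := by
  have hAP : A = P.submatrix lo lo := Matrix.ext hA
  have hCP : C = P.submatrix hi hi := Matrix.ext hC
  have hAh : A.IsHermitian := hAP ▸ hP.submatrix lo
  have hCh : C.IsHermitian := hCP ▸ hP.submatrix hi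
  have hnorm : ∑ i, ∑ j, ‖P i j‖ ^ 2
      = ∑ i, ∑ j, ‖A i j‖ ^ 2 + ∑ i, ∑ j, ‖C i j‖ ^ 2 + 2 * ∑ i, ∑ j, ‖B i j‖ ^ 2 := by
    simp only [hP.sum_norm_sq_eq_blocks, hA, hB, hC]
  rw [hnorm, trace_eq_trace_lo_add_trace_hi, ← hAP, ← hCP, apair_comm Bᴴ,
    apair_conjTranspose_right, apair_self_of_isHermitian hAh, apair_self_of_isHermitian hCh,
    apair_self_of_isHermitian (hAh.add hCh), ← ofReal_re_flipInner A, ← ofReal_re_flipInner B,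
    ← ofReal_re_flipInner C, ← ofReal_re_flipInner (A + C), ← hAh.ofReal_re_trace,
    ← hCh.ofReal_re_trace]
  convert Complex.zero_le_real.mpr (real_block_inequality hAh hCh B) using 1
  push_cast
  ring
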